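/- Let Φ denote the standard normal CDF and let f₁ be the probability density of the normal distribution with mean μ₁ and variance 1. Fix μ₁ < 0, μ₂ < 0, σ₂ > 0, and ρ ∈ (0,1) with μ₂ > ρσ₂μ₁. Define λ(v) = -(μ₂ + ρσ₂(v - μ₁))/(σ₂√(1-ρ²)) and v* = (ρσ₂μ₁ - μ₂)/(ρσ₂). Then for every x ∈ (0, -v*): (1 - Φ(λ(v* - x)))·f₁(v* - x) > Φ(λ(v* + x))·f₁(v* + x). -/

import Mathlib

open MeasureTheory ProbabilityTheory Filter

/-- The standard normal cumulative distribution function. -/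
noncomputable def Phi (x : ℝ) : ℝ := cdf (gaussianReal 0 1) x

open Set in
lemma gauss_sing (c : ℝ) : gaussianReal 0 1 {c} = 0 :=
  gaussianReal_absolutelyContinuous 0 one_ne_zero (measure_singleton c)

lemma gauss_map_neg : (gaussianReal 0 1).map (fun x : ℝ => -x) = gaussianReal 0 1 := by
  have := gaussianReal_map_const_mul (μ := 0) (v := 1) (-1)
  simp only [neg_one_mul] at this
  rw [this]
  congr 1
  · ring
  · ext
    norm_num

lemma Phi_neg (c : ℝ) : Phi (-c) = 1 - Phi c := by
  unfold Phi
  rw [cdf_eq_real, cdf_eq_real, measureReal_def, measureReal_def]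
  have h1 : gaussianReal 0 1 (Set.Iic (-c)) = gaussianReal 0 1 (Set.Ici c) := by
    conv_lhs => rw [← gauss_map_neg]
    rw [Measure.map_apply measurable_neg measurableSet_Iic]
    congr 1
    ext y
    simp
  have h2 : gaussianReal 0 1 (Set.Ici c) = gaussianReal 0 1 (Set.Ioi c) := by
    rw [← Set.Ioi_union_left]
    refine le_antisymm ?_ (measure_mono Set.subset_union_left)
    calc gaussianReal 0 1 (Set.Ioi c ∪ {c}) ≤ gaussianReal 0 1 (Set.Ioi c)
          + gaussianReal 0 1 {c} := measure_union_le _ _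
      _ = gaussianReal 0 1 (Set.Ioi c) := by rw [gauss_sing]; simp
  have h3 : gaussianReal 0 1 (Set.Iic c) + gaussianReal 0 1 (Set.Ioi c) = 1 := by
    rw [← measure_union (Set.Iic_disjoint_Ioi le_rfl) measurableSet_Ioi, Set.Iic_union_Ioi,
      measure_univ]
  rw [h1, h2]
  have hne : gaussianReal 0 1 (Set.Iic c) ≠ ⊤ := measure_ne_top _ _
  have hne' : gaussianReal 0 1 (Set.Ioi c) ≠ ⊤ := measure_ne_top _ _
  have := ENNReal.toReal_add hne hne'
  rw [h3] at this
  simp only [ENNReal.toReal_one] at this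
  linarith

lemma gauss_pos_of_open {s : Set ℝ} (hs : MeasurableSet s) (hvol : 0 < volume s) :
    0 < gaussianReal 0 1 s := by
  rw [gaussianReal_apply 0 one_ne_zero s]
  rw [lintegral_pos_iff_support (measurable_gaussianPDF 0 1)]
  have : Function.support (gaussianPDF 0 1) = Set.univ := by
    ext x
    simp only [Function.mem_support, Set.mem_univ, iff_true, gaussianPDF]
    exact fun h => absurd h (by
      simp [ENNReal.ofReal_eq_zero, not_le.mpr (gaussianPDFReal_pos 0 1 x one_ne_zero)])
  rw [this]
  simpa [Measure.restrict_apply_univ] using hvol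

lemma Phi_pos (c : ℝ) : 0 < Phi c := by
  unfold Phi
  rw [cdf_eq_real, measureReal_def]
  refine ENNReal.toReal_pos ?_ (measure_ne_top _ _)
  exact (gauss_pos_of_open measurableSet_Iic (by simp)).ne'

lemma Phi_lt_one (c : ℝ) : Phi c < 1 := by
  have := Phi_pos (-c)
  rw [Phi_neg] at this
  linarith

lemma pdf_reflect_lt (μ a b : ℝ) (h : (a - μ) ^ 2 < (b - μ) ^ 2) :
    gaussianPDFReal μ 1 b < gaussianPDFReal μ 1 a := by
  simp only [gaussianPDFReal, NNReal.coe_one, mul_one]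
  have h2 : Real.exp (-(b - μ) ^ 2 / 2) < Real.exp (-(a - μ) ^ 2 / 2) := by
    apply Real.exp_lt_exp.mpr
    nlinarith
  have hpos : (0 : ℝ) < (Real.sqrt (2 * Real.pi))⁻¹ := by positivity
  exact mul_lt_mul_of_pos_left h2 hpos

/-- Pointwise reflection inequality at `v*` in the proof of Proposition 3. -/
theorem substitutes_pointwise_reflection
    (μ₁ μ₂ σ₂ ρ : ℝ) (h1 : μ₁ < 0) (h2 : μ₂ < 0) (hσ₂ : 0 < σ₂)
    (hρ : ρ ∈ Set.Ioo (0 : ℝ) 1) (hcond : μ₂ > ρ * σ₂ * μ₁) :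
    ∀ x ∈ Set.Ioo (0 : ℝ) (-((ρ * σ₂ * μ₁ - μ₂) / (ρ * σ₂))),
      (1 - Phi (-(μ₂ + ρ * σ₂ * (((ρ * σ₂ * μ₁ - μ₂) / (ρ * σ₂) - x) - μ₁))
            / (σ₂ * Real.sqrt (1 - ρ ^ 2))))
          * gaussianPDFReal μ₁ 1 ((ρ * σ₂ * μ₁ - μ₂) / (ρ * σ₂) - x) >
      Phi (-(μ₂ + ρ * σ₂ * (((ρ * σ₂ * μ₁ - μ₂) / (ρ * σ₂) + x) - μ₁))
            / (σ₂ * Real.sqrt (1 - ρ ^ 2)))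
          * gaussianPDFReal μ₁ 1 ((ρ * σ₂ * μ₁ - μ₂) / (ρ * σ₂) + x) := by
  intro x hx
  obtain ⟨hx0, hxV⟩ := hx
  have hρ0 : 0 < ρ := hρ.1
  have hρ1 : ρ < 1 := hρ.2
  have hρσ : 0 < ρ * σ₂ := mul_pos hρ0 hσ₂
  have hρσne : ρ * σ₂ ≠ 0 := hρσ.ne'
  have hsq : 0 < Real.sqrt (1 - ρ ^ 2) := Real.sqrt_pos.mpr (by nlinarith)
  have hden : σ₂ * Real.sqrt (1 - ρ ^ 2) ≠ 0 := by positivity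
  set c : ℝ := ρ * σ₂ * x / (σ₂ * Real.sqrt (1 - ρ ^ 2)) with hc
  have e1 : -(μ₂ + ρ * σ₂ * (((ρ * σ₂ * μ₁ - μ₂) / (ρ * σ₂) - x) - μ₁))
      / (σ₂ * Real.sqrt (1 - ρ ^ 2)) = c := by
    rw [hc]
    field_simp
    ring
  have e2 : -(μ₂ + ρ * σ₂ * (((ρ * σ₂ * μ₁ - μ₂) / (ρ * σ₂) + x) - μ₁))
      / (σ₂ * Real.sqrt (1 - ρ ^ 2)) = -c := by
    rw [hc]
    field_simp
    ring
  rw [e1, e2, Phi_neg]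
  have hA : 0 < (ρ * σ₂ * μ₁ - μ₂) / (ρ * σ₂) - μ₁ := by
    have : (ρ * σ₂ * μ₁ - μ₂) / (ρ * σ₂) - μ₁ = -μ₂ / (ρ * σ₂) := by
      field_simp
      ring
    rw [this]
    exact div_pos (by linarith) hρσ
  have hf : gaussianPDFReal μ₁ 1 ((ρ * σ₂ * μ₁ - μ₂) / (ρ * σ₂) + x)
      < gaussianPDFReal μ₁ 1 ((ρ * σ₂ * μ₁ - μ₂) / (ρ * σ₂) - x) := by
    apply pdf_reflect_lt
    nlinarith [mul_pos hA hx0]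
  exact mul_lt_mul_of_pos_left hf (by linarith [Phi_lt_one c])
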